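/- arXiv:math/9909031 — 4 statements merged into one kernel-verified Lean document; each statement's English description precedes it below -/
import Mathlib

section
/- A 2-SAT formula F is satisfiable if and only if its implication digraph D_F contains no contradictory cycle, i.e., there is no literal x with a directed path from x to x̄ and a directed path from x̄ to x. -/
/-- A literal over `n` Boolean variables: a variable index together with a sign
(`true` = the variable itself, `false` = its negation). -/
abbrev Lit (n : ℕ) := Fin n × Bool

/-- Negation of a literal. -/
def negLit {n : ℕ} (x : Lit n) : Lit n := (x.1, !x.2)

/-- Value of a literal under a truth assignment. -/
def evalLit {n : ℕ} (σ : Fin n → Bool) (x : Lit n) : Bool := σ x.1 == x.2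

/-- A 2-SAT formula is a finite set of clauses `(u, v)`, read as `u ∨ v`
(with `(u,v)` and `(v,u)` treated symmetrically throughout). -/
abbrev Formula (n : ℕ) := Finset (Lit n × Lit n)

/-- Satisfiability of a 2-SAT formula. -/
def Sat {n : ℕ} (F : Formula n) : Prop :=
  ∃ σ : Fin n → Bool, ∀ c ∈ F, evalLit σ c.1 = true ∨ evalLit σ c.2 = true

/-- The edge relation of the implication digraph `D_F`: there is an edge `x → y`
iff `F` contains the clause `x̄ ∨ y` (in either order). -/
def edgeOf {n : ℕ} (F : Formula n) (x y : Lit n) : Prop :=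
  (negLit x, y) ∈ F ∨ (y, negLit x) ∈ F

/-- `reach F x y` : there is a directed path from `x` to `y` in `D_F`
(`x ⇝ x` by convention). -/
def reach {n : ℕ} (F : Formula n) : Lit n → Lit n → Prop :=
  Relation.ReflTransGen (edgeOf F)

/-- Satisfiability of `H ∧ x`, i.e. of `H` together with the unit clause `x`. -/
def SatWith {n : ℕ} (H : Formula n) (x : Lit n) : Prop :=
  ∃ σ : Fin n → Bool, evalLit σ x = true ∧
    ∀ c ∈ H, evalLit σ c.1 = true ∨ evalLit σ c.2 = true

/-- The spine of a formula. -/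
def spine {n : ℕ} (F : Formula n) : Set (Lit n) :=
  {x | ∃ H : Formula n, H ⊆ F ∧ Sat H ∧ ¬ SatWith H x}

/-- A set of literals is strictly distinct if it contains no literal together
with its negation. -/
def SDset {n : ℕ} (M : Set (Lit n)) : Prop := ∀ y ∈ M, negLit y ∉ M

lemma negLit_negLit {n : ℕ} (x : Lit n) : negLit (negLit x) = x := by
  simp [negLit]

lemma edge_neg {n : ℕ} {F : Formula n} {x y : Lit n} (h : edgeOf F x y) :
    edgeOf F (negLit y) (negLit x) := by
  unfold edgeOf at *
  rw [negLit_negLit]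
  tauto

lemma reach_neg {n : ℕ} {F : Formula n} {x y : Lit n} (h : reach F x y) :
    reach F (negLit y) (negLit x) := by
  induction h with
  | refl => exact .refl
  | tail _ e ih => exact Relation.ReflTransGen.head (edge_neg e) ih

lemma evalLit_neg {n : ℕ} (σ : Fin n → Bool) (x : Lit n) :
    evalLit σ (negLit x) = !evalLit σ x := by
  simp only [evalLit, negLit]
  cases σ x.1 <;> cases x.2 <;> rfl

lemma reach_eval {n : ℕ} {F : Formula n} {σ : Fin n → Bool}
    (hσ : ∀ c ∈ F, evalLit σ c.1 = true ∨ evalLit σ c.2 = true)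
    {x y : Lit n} (h : reach F x y) (hx : evalLit σ x = true) :
    evalLit σ y = true := by
  induction h with
  | refl => exact hx
  | @tail b c _ e ih =>
      rcases e with he | he
      · rcases hσ _ he with h1 | h1
        · rw [evalLit_neg, ih] at h1; simp at h1
        · exact h1
      · rcases hσ _ he with h1 | h1
        · exact h1
        · rw [evalLit_neg, ih] at h1; simp at h1

/-- closure of a closed set under reachability -/
lemma closed_reach {n : ℕ} {F : Formula n} {S : Set (Lit n)}
    (hS : ∀ x ∈ S, ∀ y, edgeOf F x y → y ∈ S) {x y : Lit n}
    (hx : x ∈ S) (h : reach F x y) : y ∈ S := by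
  induction h with
  | refl => exact hx
  | tail _ e ih => exact hS _ ih _ e

lemma exists_good {n : ℕ} {F : Formula n}
    (hc : ¬ ∃ x : Lit n, reach F x (negLit x) ∧ reach F (negLit x) x) :
    ∀ k : ℕ, ∃ S : Set (Lit n),
      (∀ x ∈ S, ∀ y, edgeOf F x y → y ∈ S) ∧ SDset S ∧
      ∀ i : Fin n, (i : ℕ) < k → (i, true) ∈ S ∨ (i, false) ∈ S := by
  intro k
  induction k with
  | zero => exact ⟨∅, by simp, by intro y hy; simp at hy, by simp⟩
  | succ k ih =>
      obtain ⟨S, hcl, hsd, hcov⟩ := ih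
      by_cases hk : k < n
      · set j : Fin n := ⟨k, hk⟩ with hj
        by_cases hjS : (j, true) ∈ S ∨ (j, false) ∈ S
        · refine ⟨S, hcl, hsd, ?_⟩
          intro i hi
          rcases Nat.lt_succ_iff_lt_or_eq.1 hi with h | h
          · exact hcov i h
          · have : i = j := Fin.ext h
            rw [this]; exact hjS
        · push_neg at hjS
          -- pick a literal x₀ with variable j and ¬ reach F x₀ (negLit x₀)
          have hx0 : ∃ x₀ : Lit n, x₀.1 = j ∧ ¬ reach F x₀ (negLit x₀) := by
            by_contra hcon
            push_neg at hcon
            have h1 := hcon (j, true) rfl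
            have h2 := hcon (j, false) rfl
            exact hc ⟨(j, true), h1, by simpa [negLit] using h2⟩
          obtain ⟨x₀, hx₀j, hx₀⟩ := hx0
          refine ⟨S ∪ {y | reach F x₀ y}, ?_, ?_, ?_⟩
          · intro x hx y he
            rcases hx with hx | hx
            · exact Or.inl (hcl _ hx _ he)
            · exact Or.inr (Relation.ReflTransGen.tail hx he)
          · -- SDset
            have key : ∀ z : Lit n, reach F x₀ z → negLit z ∉ S := by
              intro z hz hneg
              have : negLit x₀ ∈ S := closed_reach hcl hneg (reach_neg hz)
              have hvar : (negLit x₀).1 = j := hx₀j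
              rcases Bool.eq_false_or_eq_true (negLit x₀).2 with hb | hb
              · apply hjS.1
                have heq : negLit x₀ = (j, true) := Prod.ext hvar hb
                rwa [heq] at this
              · apply hjS.2
                have heq : negLit x₀ = (j, false) := Prod.ext hvar hb
                rwa [heq] at this
            intro y hy hny
            rcases hy with hy | hy <;> rcases hny with hny | hny
            · exact hsd _ hy hny
            · exact key _ hny (by rwa [negLit_negLit])
            · exact key _ hy hny
            · -- both reachable from x₀ : contradictory cycle at x₀
              have h1 : reach F y (negLit x₀) := by
                have := reach_neg hny
                rwa [negLit_negLit] at this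
              exact hx₀ (Relation.ReflTransGen.trans hy h1)
          · intro i hi
            rcases Nat.lt_succ_iff_lt_or_eq.1 hi with h | h
            · rcases hcov i h with h' | h'
              · exact Or.inl (Or.inl h')
              · exact Or.inr (Or.inl h')
            · have hij : i = j := Fin.ext h
              rcases Bool.eq_false_or_eq_true x₀.2 with hb | hb
              · refine Or.inl ?_
                have heq : x₀ = (i, true) := Prod.ext (by rw [hx₀j, hij]) hb
                rw [← heq]
                exact Or.inr Relation.ReflTransGen.refl
              · refine Or.inr ?_
                have heq : x₀ = (i, false) := Prod.ext (by rw [hx₀j, hij]) hb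
                rw [← heq]
                exact Or.inr Relation.ReflTransGen.refl
      · refine ⟨S, hcl, hsd, ?_⟩
        intro i hi
        rcases Nat.lt_succ_iff_lt_or_eq.1 hi with h | h
        · exact hcov i h
        · exact absurd (h ▸ i.isLt) hk

/-- A 2-SAT formula is satisfiable iff its implication digraph
has no contradictory cycle. -/
theorem sat_iff_no_contradictory_cycle {n : ℕ} (F : Formula n)
    (hF : ∀ c ∈ F, c.1.1 ≠ c.2.1) :
    Sat F ↔ ¬ ∃ x : Lit n, reach F x (negLit x) ∧ reach F (negLit x) x := by
  constructor
  · rintro ⟨σ, hσ⟩ ⟨x, h1, h2⟩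
    rcases Bool.eq_false_or_eq_true (evalLit σ x) with hb | hb
    · have := reach_eval hσ h1 hb
      rw [evalLit_neg, hb] at this
      simp at this
    · have hx' : evalLit σ (negLit x) = true := by
        rw [evalLit_neg, hb]; rfl
      have := reach_eval hσ h2 hx'
      rw [hb] at this
      simp at this
  · intro hc
    obtain ⟨S, hcl, hsd, hcov⟩ := exists_good hc n
    have hcov' : ∀ i : Fin n, (i, true) ∈ S ∨ (i, false) ∈ S :=
      fun i => hcov i i.isLt
    classical
    refine ⟨fun i => decide ((i, true) ∈ S), ?_⟩
    have mem_iff : ∀ u : Lit n, u ∈ S ↔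
        evalLit (fun i => decide ((i, true) ∈ S)) u = true := by
      intro u
      obtain ⟨i, b⟩ := u
      cases b
      · simp only [evalLit]
        constructor
        · intro h
          have : (i, true) ∉ S := fun h' => hsd _ h' (by simpa [negLit] using h)
          simp [this]
        · intro h
          have : ¬ ((i, true) ∈ S) := by
            intro h'
            simp [h'] at h
          rcases hcov' i with h' | h'
          · exact absurd h' this
          · exact h'
      · simp [evalLit]
    intro c hcF
    by_cases h1 : evalLit (fun i => decide ((i, true) ∈ S)) c.1 = true
    · exact Or.inl h1
    · right
      have hc1 : c.1 ∉ S := fun h => h1 ((mem_iff c.1).1 h)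
      have hneg : negLit c.1 ∈ S := by
        rcases Bool.eq_false_or_eq_true c.1.2 with hb | hb
        · rcases hcov' c.1.1 with h' | h'
          · exact absurd (show c.1 ∈ S by
              have heq : c.1 = (c.1.1, true) := Prod.ext rfl hb
              rwa [heq]) hc1
          · have heq : negLit c.1 = (c.1.1, false) := Prod.ext rfl (by simp [negLit, hb])
            rwa [heq]
        · rcases hcov' c.1.1 with h' | h'
          · have heq : negLit c.1 = (c.1.1, true) := Prod.ext rfl (by simp [negLit, hb])
            rwa [heq]
          · exact absurd (show c.1 ∈ S by
              have heq : c.1 = (c.1.1, false) := Prod.ext rfl hb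
              rwa [heq]) hc1
      have hedge : edgeOf F (negLit c.1) c.2 := by
        left
        rw [negLit_negLit]
        exact hcF
      have : c.2 ∈ S := hcl _ hneg _ hedge
      exact (mem_iff c.2).1 this
end

section
/- For every 2-SAT formula F and literal x, if L⁺_F(x) is not strictly distinct then even L⁺_F(x)∖{x,x̄} is not strictly distinct; equivalently, the set of literals x with L⁺_F(x) not strictly distinct coincides with the set of x with L⁺_F(x)∖{x,x̄} not strictly distinct. -/
lemma negLit_ne {n : ℕ} (x : Lit n) : negLit x ≠ x := by
  simp [negLit, Prod.ext_iff]

lemma edge_contrapose {n : ℕ} {F : Formula n} {u v : Lit n}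
    (h : edgeOf F u v) : edgeOf F (negLit v) (negLit u) := by
  rcases h with h | h
  · exact Or.inr (by rwa [negLit_negLit])
  · exact Or.inl (by rwa [negLit_negLit])

lemma reach_contrapose {n : ℕ} {F : Formula n} {u v : Lit n}
    (h : reach F u v) : reach F (negLit v) (negLit u) := by
  induction h with
  | refl => exact Relation.ReflTransGen.refl
  | tail _ e ih => exact Relation.ReflTransGen.head (edge_contrapose e) ih

lemma edge_var_ne {n : ℕ} {F : Formula n} (hF : ∀ c ∈ F, c.1.1 ≠ c.2.1)
    {u v : Lit n} (h : edgeOf F u v) : u.1 ≠ v.1 := by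
  rcases h with h | h
  · exact hF _ h
  · exact (hF _ h).symm

/-- `L⁺_F(x)` is not strictly distinct iff even
`L⁺_F(x) ∖ {x, x̄}` is not strictly distinct. -/
theorem not_sd_iff_not_sd_diff {n : ℕ} (F : Formula n)
    (hF : ∀ c ∈ F, c.1.1 ≠ c.2.1) (x : Lit n) :
    ¬ SDset {y : Lit n | reach F x y} ↔
      ¬ SDset ({y : Lit n | reach F x y} \ {x, negLit x}) := by
  constructor
  · intro h
    simp only [SDset, not_forall] at h ⊢
    obtain ⟨y, hy, hny⟩ := h
    simp only [Set.mem_setOf_eq] at hy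
    rw [not_not] at hny
    simp only [Set.mem_setOf_eq] at hny
    by_cases hyx : y = x ∨ y = negLit x
    · -- then x ⇝ negLit x
      have hxx : reach F x (negLit x) := by
        rcases hyx with rfl | h'
        · exact hny
        · rwa [h'] at hy
      rcases (Relation.ReflTransGen.cases_head hxx) with heq | ⟨z, hez, hz⟩
      · exact absurd heq.symm (negLit_ne x)
      · have hvar : x.1 ≠ z.1 := edge_var_ne hF hez
        have h1 : reach F x z := Relation.ReflTransGen.single hez
        have h2 : reach F x (negLit z) := by
          have := reach_contrapose hz
          rwa [negLit_negLit] at this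
        refine ⟨z, ⟨h1, ?_⟩, ?_⟩
        · simp only [Set.mem_insert_iff, Set.mem_singleton_iff, negLit]
          push_neg
          constructor
          · intro hc; exact hvar (congrArg Prod.fst hc).symm
          · intro hc; exact hvar (congrArg Prod.fst hc).symm
        · rw [not_not]
          refine ⟨h2, ?_⟩
          simp only [Set.mem_insert_iff, Set.mem_singleton_iff, negLit]
          push_neg
          constructor
          · intro hc; exact hvar (congrArg Prod.fst hc).symm
          · intro hc; exact hvar (congrArg Prod.fst hc).symm
    · push_neg at hyx
      obtain ⟨h1, h2⟩ := hyx
      refine ⟨y, ⟨hy, ?_⟩, ?_⟩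
      · simp only [Set.mem_insert_iff, Set.mem_singleton_iff]
        push_neg; exact ⟨h1, h2⟩
      · rw [not_not]
        refine ⟨hny, ?_⟩
        simp only [Set.mem_insert_iff, Set.mem_singleton_iff]
        push_neg
        constructor
        · intro hc
          apply h2
          rw [← hc, negLit_negLit]
        · intro hc
          apply h1
          have := congrArg negLit hc
          rwa [negLit_negLit, negLit_negLit] at this
  · intro h hSD
    apply h
    intro y hy hny
    exact hSD y hy.1 hny.1
end

section
/- If F is a satisfiable 2-SAT formula and C = x∨y is a 2-clause, then F∧C is unsatisfiable if and only if both x and y lie in the spine S(F). -/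

lemma spine_iff {n : ℕ} (F : Formula n) (hSat : Sat F) (x : Lit n) :
    x ∈ spine F ↔ ¬ SatWith F x := by
  constructor
  · rintro ⟨H, hHF, _, hH⟩ ⟨σ, hx, hσ⟩
    exact hH ⟨σ, hx, fun c hc => hσ c (hHF hc)⟩
  · intro h
    exact ⟨F, le_refl _, hSat, h⟩

/-- For a satisfiable 2-SAT formula `F` and a 2-clause
`C = x ∨ y`, the formula `F ∧ C` is unsatisfiable iff both `x` and `y` lie in
the spine of `F`. -/
theorem insert_unsat_iff_both_in_spine {n : ℕ} (F : Formula n)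
    (hF : ∀ c ∈ F, c.1.1 ≠ c.2.1) (hSat : Sat F)
    (x y : Lit n) (hxy : x.1 ≠ y.1) :
    ¬ Sat (insert (x, y) F) ↔ (x ∈ spine F ∧ y ∈ spine F) := by
  rw [spine_iff F hSat x, spine_iff F hSat y]
  constructor
  · intro h
    constructor
    · rintro ⟨σ, hx, hσ⟩
      exact h ⟨σ, fun c hc => by
        rcases Finset.mem_insert.mp hc with h' | h'
        · subst h'; exact Or.inl hx
        · exact hσ c h'⟩
    · rintro ⟨σ, hy, hσ⟩
      exact h ⟨σ, fun c hc => by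
        rcases Finset.mem_insert.mp hc with h' | h'
        · subst h'; exact Or.inr hy
        · exact hσ c h'⟩
  · rintro ⟨hx, hy⟩ ⟨σ, hσ⟩
    have hF' : ∀ c ∈ F, evalLit σ c.1 = true ∨ evalLit σ c.2 = true :=
      fun c hc => hσ c (Finset.mem_insert_of_mem hc)
    rcases hσ (x, y) (Finset.mem_insert_self _ _) with h | h
    · exact hx ⟨σ, h, hF'⟩
    · exact hy ⟨σ, h, hF'⟩
end

section
/- In the random digraph D_{n,p} on n vertices, in which each of the n(n−1) oriented edges is present independently with probability p, the probability that every vertex is reachable by a directed path from a fixed vertex equals the probability that the random (undirected) graph G_{n,p} is connected. -/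
/-- The probability of an event `A` when each coordinate `e : E` is an
independent Bernoulli(`p`) bit. -/
noncomputable def bernoulliPr {E : Type*} [Fintype E] [DecidableEq E]
    (p : ℝ) (A : Set (E → Bool)) : ℝ :=
  ∑ ω : E → Bool,
    Set.indicator A (fun ω' => ∏ e : E, if ω' e = true then p else 1 - p) ω

/-- Directed reachability in the random digraph encoded by `ω`: there is an
oriented edge `a → b` iff `a ≠ b` and the bit of `(a, b)` is on. -/
def dreach {n : ℕ} (ω : Fin n × Fin n → Bool) : Fin n → Fin n → Prop :=
  Relation.ReflTransGen (fun a b => a ≠ b ∧ ω (a, b) = true)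

/-- The random graph `G_{n,p}` encoded by a configuration of edge-bits. -/
def graphOf {n : ℕ} (η : Sym2 (Fin n) → Bool) : SimpleGraph (Fin n) :=
  SimpleGraph.fromRel fun a b => η s(a, b) = true

/-!
Explore from `v`. The set reached is exactly `S ∋ v` iff every vertex of `S` is reached from `v`
inside `S` and none of the edges leaving `S` is present. The two events involve disjoint sets of
edges, so the probability factors as `f(S) · (1 - p) ^ (|S| (n - |S|))`, where `f(S)` is the
probability that everything is reached in the same model on the vertex set `S`: in `D_{n,p}` the
edges leaving `S` are the pairs `(a, b)` with `a ∈ S`, `b ∉ S`, and in `G_{n,p}` they are the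
unordered pairs `{a, b}`, equally many. Summing over `S`, both probabilities satisfy the same
recursion, and they agree by induction on the number of vertices.
-/

open Finset Relation

section Bernoulli

variable {E E₁ E₂ : Type*} [Fintype E] [Fintype E₁] [Fintype E₂] (p : ℝ)

noncomputable def bernoulliWeight (ω : E → Bool) : ℝ :=
  ∏ e, if ω e = true then p else 1 - p

lemma bernoulliWeight_eq_mul (e : E₁ ⊕ E₂ ≃ E) (ω : E → Bool) :
    bernoulliWeight p ω =
      bernoulliWeight p (fun i => ω (e (.inl i))) *
        bernoulliWeight p (fun j => ω (e (.inr j))) := by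
  rw [bernoulliWeight, ← e.prod_comp, Fintype.prod_sum_type]
  rfl

variable [DecidableEq E] [DecidableEq E₁] [DecidableEq E₂]

lemma bernoulliPr_eq_sum (A : Set (E → Bool)) :
    bernoulliPr p A = ∑ ω, A.indicator (bernoulliWeight p) ω := rfl

lemma bernoulliPr_univ : bernoulliPr p (Set.univ : Set (E → Bool)) = 1 := by
  simp only [bernoulliPr_eq_sum, Set.indicator_univ, bernoulliWeight]
  rw [← Fintype.prod_sum fun (_ : E) (b : Bool) => if b = true then p else 1 - p]
  simp

lemma bernoulliPr_empty : bernoulliPr p (∅ : Set (E → Bool)) = 0 := by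
  simp [bernoulliPr_eq_sum]

lemma bernoulliPr_singleton (ω : E → Bool) : bernoulliPr p {ω} = bernoulliWeight p ω := by
  rw [bernoulliPr_eq_sum, Set.indicator_singleton, Finset.sum_pi_single']
  simp

lemma sum_bernoulliPr_fiber {α : Type*} [Fintype α] [DecidableEq α] (f : (E → Bool) → α) :
    ∑ a, bernoulliPr p {ω | f ω = a} = 1 := by
  simp only [bernoulliPr_eq_sum, Set.indicator_apply, Set.mem_ofPred_eq]
  rw [Finset.sum_comm, ← bernoulliPr_univ (E := E) p]
  simp [bernoulliPr_eq_sum]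

lemma bernoulliPr_sumEquiv (e : E₁ ⊕ E₂ ≃ E) (A : Set (E₁ → Bool)) (B : Set (E₂ → Bool)) :
    bernoulliPr p {ω | (fun i => ω (e (.inl i))) ∈ A ∧ (fun j => ω (e (.inr j))) ∈ B} =
      bernoulliPr p A * bernoulliPr p B := by
  classical
  let split : (E → Bool) ≃ (E₁ → Bool) × (E₂ → Bool) :=
    (e.arrowCongr (Equiv.refl Bool)).symm.trans (Equiv.sumArrowEquivProdArrow _ _ _)
  rw [bernoulliPr_eq_sum, bernoulliPr_eq_sum, bernoulliPr_eq_sum, Finset.sum_mul_sum,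
    ← Fintype.sum_prod_type', ← split.sum_comp]
  refine Fintype.sum_congr _ _ fun ω => ?_
  change _ = A.indicator _ (fun i => ω (e (.inl i))) * B.indicator _ (fun j => ω (e (.inr j)))
  simp only [Set.indicator_apply, Set.mem_ofPred_eq, ite_zero_mul_ite_zero,
    ← bernoulliWeight_eq_mul]

lemma bernoulliPr_comp_embedding (ι : E₁ ↪ E) (A : Set (E₁ → Bool)) :
    bernoulliPr p {ω | ω ∘ ι ∈ A} = bernoulliPr p A := by
  classical
  let e : E₁ ⊕ {x // x ∉ Set.range ι} ≃ E :=
    ((Equiv.ofInjective ι ι.injective).sumCongr (Equiv.refl _)).trans (Equiv.sumCompl _)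
  have h := bernoulliPr_sumEquiv p e A Set.univ
  simp only [Set.mem_univ, and_true, bernoulliPr_univ, mul_one] at h
  exact h

lemma bernoulliPr_inter {A B : Set (E → Bool)} {I : Set E} (hA : DependsOn (· ∈ A) I)
    (hB : DependsOn (· ∈ B) Iᶜ) :
    bernoulliPr p (A ∩ B) = bernoulliPr p A * bernoulliPr p B := by
  classical
  obtain ⟨f, hf⟩ := dependsOn_iff_exists_comp.1 hA
  obtain ⟨g, hg⟩ := dependsOn_iff_exists_comp.1 hB
  have hA' : A = {ω | ω ∘ Function.Embedding.subtype (· ∈ I) ∈ {σ | f σ}} :=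
    Set.ext fun ω => iff_of_eq (congrFun hf ω)
  have hB' : B = {ω | ω ∘ Function.Embedding.subtype (· ∈ Iᶜ) ∈ {τ | g τ}} :=
    Set.ext fun ω => iff_of_eq (congrFun hg ω)
  rw [hA', hB', bernoulliPr_comp_embedding, bernoulliPr_comp_embedding,
    ← bernoulliPr_sumEquiv p (Equiv.sumCompl (· ∈ I))]
  rfl

lemma bernoulliPr_forall_mem_eq_false (s : Finset E) :
    bernoulliPr p {ω | ∀ e ∈ s, ω e = false} = (1 - p) ^ #s := by
  have h :=
    bernoulliPr_comp_embedding p (Function.Embedding.subtype (· ∈ s)) {fun _ => false}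
  rw [bernoulliPr_singleton] at h
  convert h using 2
  · ext ω
    simp [funext_iff]
  · simp [bernoulliWeight]

end Bernoulli

namespace Relation

variable {α : Type*} {r : α → α → Prop} {a b : α}

theorem reflTransGen_ne_and (r : α → α → Prop) :
    ReflTransGen (fun a b => a ≠ b ∧ r a b) = ReflTransGen r :=
  le_antisymm (ReflTransGen.mono fun _ _ h => h.2) <| reflTransGen_closed fun a b h => by
    rcases eq_or_ne a b with rfl | hab
    exacts [.refl, .single ⟨hab, h⟩]

theorem ReflTransGen.mem_of_closed {S : Set α} (hS : ∀ a b, a ∈ S → r a b → b ∈ S)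
    (ha : a ∈ S) (h : ReflTransGen r a b) : b ∈ S := by
  induction h with
  | refl => exact ha
  | tail _ hbc ih => exact hS _ _ ih hbc

theorem ReflTransGen.restrict {S : Set α} (hS : ∀ x, ReflTransGen r a x → x ∈ S)
    (h : ReflTransGen r a b) :
    ReflTransGen (fun x y : S => r x y) ⟨a, hS a .refl⟩ ⟨b, hS b h⟩ := by
  induction h with
  | refl => exact .refl
  | tail _ hbc ih => exact ih.tail hbc

end Relation

section Reach

variable {V W E E' : Type*}

/-- `link a b` is the edge whose bit allows a step from `a` to `b`: `(a, b)` for `D_{n,p}`,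
`s(a, b)` for `G_{n,p}`. -/
def LinkReach (link : V → V → E) (ω : E → Bool) : V → V → Prop :=
  ReflTransGen fun a b => ω (link a b) = true

lemma dependsOn_linkReach (link : V → V → E) :
    DependsOn (LinkReach link) (Set.range (Function.uncurry link)) := by
  intro ω ω' h
  have hlink : ∀ a b, ω (link a b) = ω' (link a b) := fun a b => h _ ⟨(a, b), rfl⟩
  simp only [LinkReach, hlink]

noncomputable def reachAllProb [Fintype E] [DecidableEq E] (p : ℝ) (link : V → V → E)
    (v : V) : ℝ :=
  bernoulliPr p {ω | ∀ u, LinkReach link ω v u}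

lemma reachAllProb_comp_embedding [Fintype E] [DecidableEq E] [Fintype E'] [DecidableEq E']
    (p : ℝ) (ι : E' ↪ E) (link : W → W → E') (w : W) :
    reachAllProb p (fun a b => ι (link a b)) w = reachAllProb p link w :=
  bernoulliPr_comp_embedding p ι {ω | ∀ u, LinkReach link ω w u}

variable [Fintype V]

open Classical in
noncomputable def reachSet (link : V → V → E) (ω : E → Bool) (v : V) : Finset V :=
  {u | LinkReach link ω v u}

variable (link : V → V → E) {S : Finset V} {v : V}

lemma mem_reachSet {ω : E → Bool} {u : V} : u ∈ reachSet link ω v ↔ LinkReach link ω v u := by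
  simp [reachSet]

lemma reachSet_eq_iff (hv : v ∈ S) (ω : E → Bool) :
    reachSet link ω v = S ↔
      (∀ u : S, LinkReach (fun a b : S => link a b) ω ⟨v, hv⟩ u) ∧
        ∀ a ∈ S, ∀ b ∉ S, ω (link a b) = false := by
  constructor
  · intro h
    have hmem : ∀ x, LinkReach link ω v x ↔ x ∈ S := fun x => by rw [← h, mem_reachSet]
    refine ⟨fun u => ((hmem u).2 u.2).restrict fun x => (hmem x).1, fun a ha b hb => ?_⟩
    by_contra hab
    rw [Bool.not_eq_false] at hab
    exact hb ((hmem b).1 (((hmem a).2 ha).tail hab))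
  · rintro ⟨hin, hout⟩
    ext u
    rw [mem_reachSet]
    refine ⟨fun h => h.mem_of_closed (fun a b ha hab => ?_) hv, fun hu => ?_⟩
    · by_contra hb
      simp [hout a ha b hb] at hab
    · exact ReflTransGen.lift (p := fun a b => ω (link a b) = true) Subtype.val
        (fun _ _ h => h) _ _ (hin ⟨u, hu⟩)

variable {link}

lemma card_image₂_compl [DecidableEq V] [DecidableEq E]
    (hlink : ∀ a b c d, link a b = link c d → a = c ∧ b = d ∨ a = d ∧ b = c) :
    #(image₂ link S Sᶜ) = #S * (Fintype.card V - #S) := by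
  rw [card_image₂_iff.2, card_compl]
  rintro ⟨a, b⟩ hab ⟨c, d⟩ hcd h
  simp only [coe_compl, Set.mem_prod, mem_coe, Set.mem_compl_iff] at hab hcd
  rcases hlink a b c d h with ⟨rfl, rfl⟩ | ⟨rfl, rfl⟩
  · rfl
  · exact absurd hab.1 hcd.2

variable [Fintype E] [DecidableEq E] (p : ℝ)

lemma bernoulliPr_reachSet_eq_univ :
    bernoulliPr p {ω | reachSet link ω v = univ} = reachAllProb p link v := by
  unfold reachAllProb
  congr
  ext ω
  simp only [Finset.eq_univ_iff_forall, mem_reachSet]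

lemma bernoulliPr_reachSet_of_notMem (hv : v ∉ S) :
    bernoulliPr p {ω | reachSet link ω v = S} = 0 := by
  rw [← bernoulliPr_empty (E := E) p]
  refine congrArg _ (Set.eq_empty_of_forall_notMem fun ω h => hv ?_)
  exact h ▸ (mem_reachSet link).2 .refl

lemma bernoulliPr_reachSet_eq [DecidableEq V]
    (hlink : ∀ a b c d, link a b = link c d → a = c ∧ b = d ∨ a = d ∧ b = c) (hv : v ∈ S) :
    bernoulliPr p {ω | reachSet link ω v = S} =
      reachAllProb p (fun a b : S => link a b) ⟨v, hv⟩ *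
        (1 - p) ^ (#S * (Fintype.card V - #S)) := by
  have hset : {ω | reachSet link ω v = S} =
      {ω | ∀ u : S, LinkReach (fun a b : S => link a b) ω ⟨v, hv⟩ u} ∩
        {ω | ∀ e ∈ image₂ link S Sᶜ, ω e = false} := by
    ext ω
    simp only [reachSet_eq_iff link hv, forall_mem_image₂, mem_compl, Set.mem_inter_iff,
      Set.mem_ofPred_eq]
  have hinside : DependsOn (· ∈ {ω | ∀ u : S, LinkReach (fun a b : S => link a b) ω ⟨v, hv⟩ u})
      (Set.range (Function.uncurry fun a b : S => link a b)) := fun ω ω' h => by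
    simp only [Set.mem_ofPred_eq, dependsOn_linkReach _ h]
  have hborder : DependsOn (· ∈ {ω | ∀ e ∈ image₂ link S Sᶜ, ω e = false})
      (image₂ link S Sᶜ : Set E) := fun ω ω' h =>
    propext (forall₂_congr fun e he => by rw [h e he])
  have hdisjoint : (image₂ link S Sᶜ : Set E) ⊆
      (Set.range (Function.uncurry fun a b : S => link a b))ᶜ := by
    rintro e he ⟨⟨a, b⟩, rfl⟩
    obtain ⟨c, hc, d, hd, hcd⟩ := mem_image₂.1 he
    rcases hlink _ _ _ _ hcd with ⟨-, rfl⟩ | ⟨-, rfl⟩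
    · exact mem_compl.1 hd b.2
    · exact mem_compl.1 hd a.2
  rw [hset, bernoulliPr_inter p hinside (hborder.mono hdisjoint), bernoulliPr_forall_mem_eq_false,
    card_image₂_compl hlink]
  rfl

end Reach

section Models

variable {W : Type*} [Fintype W] [DecidableEq W] (p : ℝ)

lemma reachAllProb_subtype_prod {S : Finset W} (w : S) :
    reachAllProb p (fun a b : S => ((a : W), (b : W))) w =
      reachAllProb p (Prod.mk : S → S → S × S) w :=
  reachAllProb_comp_embedding p
    ((Function.Embedding.subtype _).prodMap (Function.Embedding.subtype _)) Prod.mk w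

lemma reachAllProb_subtype_sym2 {S : Finset W} (w : S) :
    reachAllProb p (fun a b : S => s((a : W), (b : W))) w =
      reachAllProb p (fun a b : S => s(a, b)) w :=
  reachAllProb_comp_embedding p (Function.Embedding.subtype _).sym2Map (fun a b => s(a, b)) w

theorem reachAllProb_prod_eq_sym2 (w : W) :
    reachAllProb p (Prod.mk : W → W → W × W) w = reachAllProb p (fun a b : W => s(a, b)) w := by
  induction hk : Fintype.card W using Nat.strong_induction_on generalizing W with
  | _ k ih =>
  have hfiber : ∀ S ∈ univ.erase (univ : Finset W),
      bernoulliPr p {ω | reachSet Prod.mk ω w = S} =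
        bernoulliPr p {η | reachSet (fun a b : W => s(a, b)) η w = S} := by
    intro S hS
    by_cases hw : w ∈ S
    · have hlt : Fintype.card S < k := by
        rw [Fintype.card_coe, ← hk]
        exact (card_lt_iff_ne_univ _).2 (ne_of_mem_erase hS)
      rw [bernoulliPr_reachSet_eq p (fun _ _ _ _ h => Or.inl (Prod.ext_iff.1 h)) hw,
        bernoulliPr_reachSet_eq p (fun _ _ _ _ => Sym2.eq_iff.1) hw,
        reachAllProb_subtype_prod, reachAllProb_subtype_sym2, ih _ hlt _ rfl]
    · rw [bernoulliPr_reachSet_of_notMem p hw, bernoulliPr_reachSet_of_notMem p hw]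
  have hdir := sum_bernoulliPr_fiber p fun ω : W × W → Bool => reachSet Prod.mk ω w
  have hundir :=
    sum_bernoulliPr_fiber p fun η : Sym2 W → Bool => reachSet (fun a b => s(a, b)) η w
  rw [← add_sum_erase _ _ (mem_univ univ), sum_congr rfl hfiber,
    bernoulliPr_reachSet_eq_univ] at hdir
  rw [← add_sum_erase _ _ (mem_univ univ), bernoulliPr_reachSet_eq_univ] at hundir
  linarith

end Models

lemma graphOf_connected_iff {n : ℕ} (η : Sym2 (Fin n) → Bool) (v : Fin n) :
    (graphOf η).Connected ↔ ∀ u, LinkReach (fun a b => s(a, b)) η v u := by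
  have hadj : (graphOf η).Adj = fun a b => a ≠ b ∧ η s(a, b) = true := by
    ext a b
    simp [graphOf, Sym2.eq_swap]
  have hreach : ∀ a b, (graphOf η).Reachable a b ↔ LinkReach (fun a b => s(a, b)) η a b := by
    intro a b
    rw [SimpleGraph.reachable_iff_reflTransGen, hadj, reflTransGen_ne_and]
    rfl
  refine ⟨fun h u => (hreach v u).1 (h.preconnected v u), fun h => ?_⟩
  exact (SimpleGraph.connected_iff_exists_forall_reachable _).2
    ⟨v, fun u => (hreach v u).2 (h u)⟩

theorem reachAll_prob_eq_connected_prob_general (n : ℕ) (p : ℝ) (v : Fin n) :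
    bernoulliPr p {ω : Fin n × Fin n → Bool | ∀ u : Fin n, dreach ω v u} =
      bernoulliPr p {η : Sym2 (Fin n) → Bool | (graphOf η).Connected} := by
  simp only [dreach, reflTransGen_ne_and, graphOf_connected_iff _ v]
  exact reachAllProb_prod_eq_sym2 p v

/-- In `D_{n,p}` the probability that every vertex can be
reached from a fixed vertex `v` equals the probability that `G_{n,p}` is
connected. -/
theorem reachAll_prob_eq_connected_prob (n : ℕ) (hn : 1 ≤ n) (p : ℝ)
    (hp0 : 0 ≤ p) (hp1 : p ≤ 1) (v : Fin n) :
    bernoulliPr p {ω : Fin n × Fin n → Bool | ∀ u : Fin n, dreach ω v u} =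
      bernoulliPr p {η : Sym2 (Fin n) → Bool | (graphOf η).Connected} :=
  reachAll_prob_eq_connected_prob_general n p v
end
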